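/- Let E be a real normed space, φ a C^∞-bump on ℝ^p, (u_n) a norm-bounded sequence in E, x_0 ∈ ℝ^p, and (x_n)_{n≥1} a sequence in ℝ^p with |x_{n+1} − x_0| < (1/3)|x_n − x_0| < 1 for all n. Set r_n = |x_n − x_0| and φ_n(x) = φ((x − x_n)/(r_n/2)). Let m ∈ ℕ and let (c_n) be a sequence of real numbers with c_n / r_n^m → 0. Then the function f : ℝ^p → E defined by f(x) = Σ_n c_n · φ_n(x) · u_n (at each point x at most one summand is nonzero, since the supports of the φ_n are pairwise disjoint closed balls around the x_n) belongs to C^m(ℝ^p, E). -/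

import Mathlib

/-!
The bumps have pairwise disjoint supports, the `n`-th one inside the annulus
`r_n / 2 ≤ |x - x₀| ≤ 3 r_n / 2`, so away from `x₀` the series is locally a finite sum of smooth
functions, and at every point at most one term is nonzero. Rescaling gives
`‖D^k (c_n φ_n u_n)‖ ≲ |c_n| r_n^{-k}`, and since `r_n ≤ 2 |x - x₀|` on the support this is at most
`ε_n |x - x₀|^{m-k}` with `ε_n → 0`. Hence the termwise `k`-th derivatives sum to a function that is
`o(|x - x₀|^{m-k})` at `x₀`: for `k < m` it is differentiable at `x₀` with derivative `0`, and for
`k = m` it is continuous at `x₀`.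
-/

open Set Filter Topology Function Metric

theorem norm_tsum_le_of_subsingleton_support {ι F : Type*} [NormedAddCommGroup F] {a : ι → F}
    (ha : (support a).Subsingleton) {C : ℝ} (hC : 0 ≤ C) (hb : ∀ i ∈ support a, ‖a i‖ ≤ C) :
    ‖∑' i, a i‖ ≤ C := by
  rcases ha.eq_empty_or_singleton with ha | ⟨i, ha⟩
  · simpa [support_eq_empty_iff.1 ha] using hC
  · rw [tsum_eq_single i fun j hj => notMem_support.1 (by simpa [ha] using hj)]
    exact hb i (by simp [ha])

theorem Asymptotics.isBigO_norm_sub_pow_succ {V : Type*} [NormedAddCommGroup V] (x₀ : V) (j : ℕ) :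
    (fun y => ‖y - x₀‖ ^ (j + 1)) =O[𝓝 x₀] fun y => y - x₀ := by
  have hpow : (fun y => ‖y - x₀‖ ^ j) =O[𝓝 x₀] fun _ => (1 : ℝ) :=
    ((continuous_id.sub continuous_const).norm.pow j).continuousAt.isBigO_one ℝ
  have hprod := hpow.mul (isBigO_refl (fun y => ‖y - x₀‖) (𝓝 x₀))
  simp only [one_mul, ← pow_succ] at hprod
  exact hprod.trans (isBigO_norm_left.2 (isBigO_refl _ _))

theorem eventuallyEq_tsum_finset_sum {ι V F : Type*} [TopologicalSpace V] [AddCommMonoid F]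
    [TopologicalSpace F] {s : ι → Set V} {h : ι → V → F} (hsupp : ∀ i, tsupport (h i) ⊆ s i)
    {x : V} {t : Finset ι} (ht : ∀ᶠ y in 𝓝 x, ∀ i ∉ t, y ∉ s i) :
    (fun y => ∑' i, h i y) =ᶠ[𝓝 x] fun y => ∑ i ∈ t, h i y :=
  ht.mono fun _ hy => tsum_eq_sum fun i hi =>
    image_eq_zero_of_notMem_tsupport fun hyi => hy i hi (hsupp i hyi)

structure ShrinksDisjointlyTo {ι V : Type*} [TopologicalSpace V] (s : ι → Set V) (x₀ : V) :
    Prop where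
  pairwise_disjoint : Pairwise (Disjoint on s)
  notMem : ∀ i, x₀ ∉ s i
  tendsto_smallSets : Tendsto s cofinite (𝓝 x₀).smallSets

namespace ShrinksDisjointlyTo

section Topological

variable {ι V : Type*} [TopologicalSpace V] {s : ι → Set V} {x₀ : V}

theorem exists_finset_eventually_notMem [T2Space V] (hs : ShrinksDisjointlyTo s x₀)
    {x : V} (hx : x ≠ x₀) : ∃ t : Finset ι, ∀ᶠ y in 𝓝 x, ∀ i ∉ t, y ∉ s i := by
  obtain ⟨U, hU, W, hW, hUW⟩ := Filter.disjoint_iff.1 (disjoint_nhds_nhds.2 hx.symm)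
  have hfin : {i | ¬ s i ⊆ U}.Finite :=
    eventually_cofinite.1 (tendsto_smallSets_iff.1 hs.tendsto_smallSets U hU)
  refine ⟨hfin.toFinset, eventually_of_mem hW fun y hy i hi hyi => ?_⟩
  have hiU : s i ⊆ U := by simpa using hi
  exact hUW.notMem_of_mem_right hy (hiU hyi)

theorem subsingleton_support_apply {F : Type*} [Zero F] {h : ι → V → F}
    (hs : ShrinksDisjointlyTo s x₀) (hsupp : ∀ i, tsupport (h i) ⊆ s i) (y : V) :
    (support fun i => h i y).Subsingleton :=
  fun i hi j hj => hs.pairwise_disjoint.eq <| not_disjoint_iff.2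
    ⟨y, hsupp i (subset_tsupport _ hi), hsupp j (subset_tsupport _ hj)⟩

theorem tsum_apply_eq_zero {F : Type*} [AddCommMonoid F] [TopologicalSpace F] {h : ι → V → F}
    (hs : ShrinksDisjointlyTo s x₀) (hsupp : ∀ i, tsupport (h i) ⊆ s i) :
    ∑' i, h i x₀ = 0 := by
  simp [fun i => image_eq_zero_of_notMem_tsupport fun hi => hs.notMem i (hsupp i hi)]

section Normed

variable {F : Type*} [NormedAddCommGroup F] {h : ι → V → F} {ε : ι → ℝ}

theorem isLittleO_tsum (hs : ShrinksDisjointlyTo s x₀) (hsupp : ∀ i, tsupport (h i) ⊆ s i)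
    (hε : Tendsto ε cofinite (𝓝 0)) {ρ : V → ℝ} (hρ : 0 ≤ ρ)
    (hbound : ∀ i y, ‖h i y‖ ≤ ε i * ρ y) :
    (fun y => ∑' i, h i y) =o[𝓝 x₀] ρ := by
  refine Asymptotics.isLittleO_iff.2 fun δ hδ => ?_
  have hfin : {i | ¬ ε i < δ}.Finite := eventually_cofinite.1 (hε.eventually_lt_const hδ)
  have hnear : ∀ᶠ y in 𝓝 x₀, ∀ i ∈ {i | ¬ ε i < δ}, y ∉ tsupport (h i) :=
    (eventually_all_finite hfin).2 fun i _ =>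
      (isClosed_tsupport _).isOpen_compl.mem_nhds fun hi => hs.notMem i (hsupp i hi)
  filter_upwards [hnear] with y hy
  rw [Real.norm_of_nonneg (hρ y)]
  refine norm_tsum_le_of_subsingleton_support (hs.subsingleton_support_apply hsupp y)
    (mul_nonneg hδ.le (hρ y)) fun i hi => ?_
  have hεi : ε i < δ := not_not.1 fun hi' => hy i hi' (subset_tsupport _ hi)
  exact (hbound i y).trans (mul_le_mul_of_nonneg_right hεi.le (hρ y))

theorem continuous_tsum [T2Space V] (hs : ShrinksDisjointlyTo s x₀)
    (hsupp : ∀ i, tsupport (h i) ⊆ s i) (hcont : ∀ i, Continuous (h i))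
    (hε : Tendsto ε cofinite (𝓝 0)) (hbound : ∀ i y, ‖h i y‖ ≤ ε i) :
    Continuous fun y => ∑' i, h i y := by
  refine continuous_iff_continuousAt.2 fun x => ?_
  rcases eq_or_ne x x₀ with rfl | hx
  · rw [ContinuousAt, hs.tsum_apply_eq_zero hsupp]
    refine (Asymptotics.isLittleO_one_iff ℝ).1
      (hs.isLittleO_tsum hsupp hε (ρ := fun _ => 1) (fun _ => zero_le_one) ?_)
    simpa using hbound
  · obtain ⟨t, ht⟩ := hs.exists_finset_eventually_notMem hx
    exact (continuous_finsetSum t fun i _ => hcont i).continuousAt.congr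
      (eventuallyEq_tsum_finset_sum hsupp ht).symm

end Normed

end Topological

section Calculus

variable {ι V F : Type*} [NormedAddCommGroup V] [NormedSpace ℝ V]
  [NormedAddCommGroup F] [NormedSpace ℝ F] {s : ι → Set V} {x₀ : V} {h : ι → V → F}

theorem hasFDerivAt_tsum (hs : ShrinksDisjointlyTo s x₀) (hsupp : ∀ i, tsupport (h i) ⊆ s i)
    (hdiff : ∀ i, Differentiable ℝ (h i)) {ε : ι → ℝ} (hε : Tendsto ε cofinite (𝓝 0)) {j : ℕ}
    (hbound : ∀ i y, ‖h i y‖ ≤ ε i * ‖y - x₀‖ ^ (j + 1)) (x : V) :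
    HasFDerivAt (fun y => ∑' i, h i y) (∑' i, fderiv ℝ (h i) x) x := by
  have hsupp' : ∀ i, tsupport (fderiv ℝ (h i)) ⊆ s i :=
    fun i => (tsupport_fderiv_subset ℝ).trans (hsupp i)
  rcases eq_or_ne x x₀ with rfl | hx
  · rw [hs.tsum_apply_eq_zero hsupp', hasFDerivAt_iff_isLittleO]
    simp only [hs.tsum_apply_eq_zero hsupp, sub_zero, zero_apply]
    exact (hs.isLittleO_tsum hsupp hε (fun _ => by positivity) hbound).trans_isBigO
      (Asymptotics.isBigO_norm_sub_pow_succ x j)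
  · obtain ⟨t, ht⟩ := hs.exists_finset_eventually_notMem hx
    rw [(eventuallyEq_tsum_finset_sum hsupp' ht).eq_of_nhds]
    exact (HasFDerivAt.fun_sum fun i _ => (hdiff i x).hasFDerivAt).congr_of_eventuallyEq
      (eventuallyEq_tsum_finset_sum hsupp ht)

section ContDiff

variable {m : ℕ} {ε : ℕ → ι → ℝ}

theorem hasFDerivAt_tsum_iteratedFDeriv (hs : ShrinksDisjointlyTo s x₀)
    (hsupp : ∀ i, tsupport (h i) ⊆ s i) (hh : ∀ i, ContDiff ℝ m (h i))
    (hε : ∀ k ≤ m, Tendsto (ε k) cofinite (𝓝 0))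
    (hbound : ∀ k ≤ m, ∀ i y, ‖iteratedFDeriv ℝ k (h i) y‖ ≤ ε k i * ‖y - x₀‖ ^ (m - k))
    {k : ℕ} (hk : k < m) (x : V) :
    HasFDerivAt (fun y => ∑' i, iteratedFDeriv ℝ k (h i) y)
      (∑' i, fderiv ℝ (iteratedFDeriv ℝ k (h i)) x) x := by
  refine hs.hasFDerivAt_tsum (fun i => (tsupport_iteratedFDeriv_subset k).trans (hsupp i))
    (fun i => (hh i).differentiable_iteratedFDeriv (mod_cast hk)) (hε k hk.le) (j := m - k - 1)
    (fun i y => ?_) x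
  rw [show m - k - 1 + 1 = m - k by omega]
  exact hbound k hk.le i y

theorem iteratedFDeriv_tsum_eq (hs : ShrinksDisjointlyTo s x₀)
    (hsupp : ∀ i, tsupport (h i) ⊆ s i) (hh : ∀ i, ContDiff ℝ m (h i))
    (hε : ∀ k ≤ m, Tendsto (ε k) cofinite (𝓝 0))
    (hbound : ∀ k ≤ m, ∀ i y, ‖iteratedFDeriv ℝ k (h i) y‖ ≤ ε k i * ‖y - x₀‖ ^ (m - k))
    {k : ℕ} (hk : k ≤ m) :
    iteratedFDeriv ℝ k (fun y => ∑' i, h i y) = fun y => ∑' i, iteratedFDeriv ℝ k (h i) y := by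
  induction k with
  | zero =>
    ext1 x
    simp_rw [iteratedFDeriv_zero_eq_comp]
    exact (continuousMultilinearCurryFin0 ℝ V F).symm.toContinuousLinearEquiv.map_tsum
  | succ k ih =>
    ext1 x
    simp_rw [iteratedFDeriv_succ_eq_comp_left, ih (by omega), comp_apply,
      (hs.hasFDerivAt_tsum_iteratedFDeriv hsupp hh hε hbound hk x).fderiv]
    exact (continuousMultilinearCurryLeftEquiv ℝ
      (fun _ : Fin (k + 1) => V) F).symm.toContinuousLinearEquiv.map_tsum

theorem contDiff_tsum (hs : ShrinksDisjointlyTo s x₀)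
    (hsupp : ∀ i, tsupport (h i) ⊆ s i) (hh : ∀ i, ContDiff ℝ m (h i))
    (hε : ∀ k ≤ m, Tendsto (ε k) cofinite (𝓝 0))
    (hbound : ∀ k ≤ m, ∀ i y, ‖iteratedFDeriv ℝ k (h i) y‖ ≤ ε k i * ‖y - x₀‖ ^ (m - k)) :
    ContDiff ℝ m fun y => ∑' i, h i y := by
  have hdiff : ∀ k < m, Differentiable ℝ fun y => ∑' i, iteratedFDeriv ℝ k (h i) y :=
    fun k hk x => (hs.hasFDerivAt_tsum_iteratedFDeriv hsupp hh hε hbound hk x).differentiableAt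
  refine contDiff_iff_continuous_differentiable.2 ⟨fun k hk => ?_, fun k hk => ?_⟩
  · have hk : k ≤ m := by exact_mod_cast hk
    rw [hs.iteratedFDeriv_tsum_eq hsupp hh hε hbound hk]
    rcases hk.lt_or_eq with hk | rfl
    · exact (hdiff k hk).continuous
    · refine hs.continuous_tsum (fun i => (tsupport_iteratedFDeriv_subset k).trans (hsupp i))
        (fun i => (hh i).continuous_iteratedFDeriv le_rfl) (hε k le_rfl) fun i y => ?_
      simpa using hbound k le_rfl i y
  · have hk : k < m := by exact_mod_cast hk
    rw [hs.iteratedFDeriv_tsum_eq hsupp hh hε hbound hk.le]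
    exact hdiff k hk

end ContDiff

end Calculus

end ShrinksDisjointlyTo

theorem pos_of_succ_lt_third {r : ℕ → ℝ} (hr0 : ∀ n, 0 ≤ r n)
    (hr : ∀ n, r (n + 1) < 1 / 3 * r n) (n : ℕ) : 0 < r n := by
  linarith [hr0 (n + 1), hr n]

theorem lt_third_of_succ_lt_third {r : ℕ → ℝ} (hr0 : ∀ n, 0 ≤ r n)
    (hr : ∀ n, r (n + 1) < 1 / 3 * r n) {n j : ℕ} (hnj : n < j) : r j < 1 / 3 * r n := by
  induction j, hnj using Nat.le_induction with
  | base => exact hr n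
  | succ j _ ih => linarith [hr j, hr0 j]

theorem tendsto_zero_of_succ_lt_third {r : ℕ → ℝ} (hr0 : ∀ n, 0 ≤ r n)
    (hr : ∀ n, r (n + 1) < 1 / 3 * r n) : Tendsto r atTop (𝓝 0) := by
  have hgeom : ∀ n, r n ≤ r 0 * (1 / 3) ^ n := fun n => by
    induction n with
    | zero => simp
    | succ n ih => rw [pow_succ]; linarith [hr n]
  have hpow := (tendsto_pow_atTop_nhds_zero_of_lt_one (r := (1 / 3 : ℝ)) (by norm_num)
    (by norm_num)).const_mul (r 0)
  rw [mul_zero] at hpow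
  exact squeeze_zero hr0 hgeom hpow

section Balls

variable {V : Type*} [NormedAddCommGroup V]

theorem norm_sub_mem_Icc_of_mem_closedBall_half {a x x₀ : V}
    (hx : x ∈ closedBall a (‖a - x₀‖ / 2)) :
    ‖x - x₀‖ ∈ Icc (‖a - x₀‖ / 2) (3 * (‖a - x₀‖ / 2)) := by
  rw [mem_closedBall, dist_eq_norm] at hx
  have h₁ := norm_sub_le_norm_sub_add_norm_sub a x x₀
  have h₂ := norm_sub_le_norm_sub_add_norm_sub x a x₀
  rw [norm_sub_rev a x] at h₁
  constructor <;> linarith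

theorem shrinksDisjointlyTo_closedBall {x₀ : V} {a : ℕ → V}
    (ha : ∀ n, ‖a (n + 1) - x₀‖ < 1 / 3 * ‖a n - x₀‖) :
    ShrinksDisjointlyTo (fun n => closedBall (a n) (‖a n - x₀‖ / 2)) x₀ := by
  have hr0 : ∀ n, 0 ≤ ‖a n - x₀‖ := fun n => norm_nonneg _
  refine ⟨(pairwise_disjoint_on _).2 fun n j hnj => ?_, fun n hn => ?_, ?_⟩
  · refine Set.disjoint_left.2 fun x hxn hxj => ?_
    have hn := (norm_sub_mem_Icc_of_mem_closedBall_half hxn).1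
    have hj := (norm_sub_mem_Icc_of_mem_closedBall_half hxj).2
    linarith [lt_third_of_succ_lt_third hr0 ha hnj]
  · rw [mem_closedBall, dist_eq_norm, norm_sub_rev] at hn
    linarith [pos_of_succ_lt_third hr0 ha n]
  · have hrad : Tendsto (fun n => 3 * (‖a n - x₀‖ / 2)) atTop (𝓝 0) := by
      simpa using ((tendsto_zero_of_succ_lt_third hr0 ha).div_const 2).const_mul 3
    rw [Nat.cofinite_eq_atTop]
    refine ((tendsto_closedBall_smallSets x₀).comp hrad).smallSets_mono
      (Eventually.of_forall fun n x hx => ?_)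
    rw [comp_apply, mem_closedBall, dist_eq_norm]
    exact (norm_sub_mem_Icc_of_mem_closedBall_half hx).2

end Balls

section Bump

variable {V F : Type*} [NormedAddCommGroup V] [NormedSpace ℝ V]
  [NormedAddCommGroup F] [NormedSpace ℝ F] {φ : V → ℝ}

theorem tsupport_smul_comp_smul_sub_subset (hφ0 : ∀ x, 1 ≤ ‖x‖ → φ x = 0) (c : ℝ) {ρ : ℝ}
    (hρ : 0 < ρ) (a : V) (w : F) :
    tsupport (fun x => (c * φ (ρ⁻¹ • (x - a))) • w) ⊆ closedBall a ρ := by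
  refine closure_minimal (fun x hx => ?_) isClosed_closedBall
  by_contra hxa
  rw [mem_closedBall, dist_eq_norm, not_le] at hxa
  refine hx (show (c * φ (ρ⁻¹ • (x - a))) • w = 0 from ?_)
  rw [hφ0 _ ?_, mul_zero, zero_smul]
  rw [norm_smul, Real.norm_of_nonneg (inv_nonneg.2 hρ.le), ← div_eq_inv_mul, le_div_iff₀ hρ]
  linarith

theorem norm_iteratedFDeriv_smul_const_le {f : V → ℝ} {k : ℕ} {x : V}
    (hf : ContDiffAt ℝ k f x) (w : F) :
    ‖iteratedFDeriv ℝ k (fun y => f y • w) x‖ ≤ ‖iteratedFDeriv ℝ k f x‖ * ‖w‖ := by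
  rw [iteratedFDeriv_smul_const_apply hf]
  refine (ContinuousLinearMap.norm_compContinuousMultilinearMap_le _ _).trans ?_
  rw [ContinuousLinearMap.norm_smulRight_apply, mul_comm]
  gcongr
  exact mul_le_of_le_one_left (norm_nonneg w) ContinuousLinearMap.norm_id_le

theorem norm_iteratedFDeriv_comp_smul_sub {k : ℕ} (hφ : ContDiff ℝ k φ) (ρ : ℝ) (a x : V) :
    ‖iteratedFDeriv ℝ k (fun x => φ (ρ • (x - a))) x‖ =
      |ρ| ^ k * ‖iteratedFDeriv ℝ k φ (ρ • (x - a))‖ := by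
  rw [iteratedFDeriv_comp_sub (f := fun z => φ (ρ • z)), iteratedFDeriv_comp_const_smul ρ hφ,
    norm_smul, norm_pow, Real.norm_eq_abs]

theorem norm_iteratedFDeriv_smul_comp_smul_sub_le {k : ℕ} (hφ : ContDiff ℝ k φ) (c ρ : ℝ)
    (a : V) (w : F) (x : V) :
    ‖iteratedFDeriv ℝ k (fun x => (c * φ (ρ • (x - a))) • w) x‖ ≤
      |c| * ‖w‖ * |ρ| ^ k * ‖iteratedFDeriv ℝ k φ (ρ • (x - a))‖ := by
  have hψ : ContDiff ℝ k fun x => φ (ρ • (x - a)) := by fun_prop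
  simp_rw [mul_comm c, mul_smul]
  refine (norm_iteratedFDeriv_smul_const_le hψ.contDiffAt (c • w)).trans_eq ?_
  rw [norm_iteratedFDeriv_comp_smul_sub hφ, norm_smul, Real.norm_eq_abs]
  ring

theorem norm_iteratedFDeriv_bump_le {k m : ℕ} (hkm : k ≤ m) (hφ : ContDiff ℝ k φ)
    (hφ0 : ∀ x, 1 ≤ ‖x‖ → φ x = 0) {M : ℝ} (hM : ∀ z, ‖iteratedFDeriv ℝ k φ z‖ ≤ M) (c : ℝ)
    {a x₀ : V} (ha : a ≠ x₀) (w : F) (y : V) :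
    ‖iteratedFDeriv ℝ k (fun x => (c * φ ((‖a - x₀‖ / 2)⁻¹ • (x - a))) • w) y‖ ≤
      2 ^ m * M * ‖w‖ * |c / ‖a - x₀‖ ^ m| * ‖y - x₀‖ ^ (m - k) := by
  have hρ : 0 < ‖a - x₀‖ / 2 := by have := norm_pos_iff.2 (sub_ne_zero.2 ha); positivity
  have hM0 : 0 ≤ M := (norm_nonneg _).trans (hM 0)
  by_cases hy : y ∈ closedBall a (‖a - x₀‖ / 2)
  · set ρ := ‖a - x₀‖ / 2
    have hρy : ρ ≤ ‖y - x₀‖ := (norm_sub_mem_Icc_of_mem_closedBall_half hy).1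
    have ha2 : ‖a - x₀‖ = 2 * ρ := by ring
    calc _ ≤ |c| * ‖w‖ * |ρ⁻¹| ^ k * ‖iteratedFDeriv ℝ k φ (ρ⁻¹ • (y - a))‖ :=
          norm_iteratedFDeriv_smul_comp_smul_sub_le hφ c ρ⁻¹ a w y
      _ ≤ |c| * ‖w‖ * (ρ⁻¹) ^ k * M := by
          rw [abs_of_pos (inv_pos.2 hρ)]; gcongr; exact hM _
      _ = 2 ^ m * M * ‖w‖ * |c / ‖a - x₀‖ ^ m| * ρ ^ (m - k) := by
          rw [ha2, abs_div, abs_of_pos (by positivity : 0 < (2 * ρ) ^ m), pow_sub₀ _ hρ.ne' hkm,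
            mul_pow, inv_pow]
          field_simp
      _ ≤ _ := by gcongr
  · have hsupp := (tsupport_iteratedFDeriv_subset (𝕜 := ℝ) k).trans
      (tsupport_smul_comp_smul_sub_subset hφ0 c hρ a w)
    rw [image_eq_zero_of_notMem_tsupport fun h => hy (hsupp h), norm_zero]
    positivity

end Bump

theorem bump_sum_contDiff {p : ℕ} {E : Type*} [NormedAddCommGroup E] [NormedSpace ℝ E]
    (φ : EuclideanSpace ℝ (Fin p) → ℝ) (hφsmooth : ContDiff ℝ ((⊤ : ℕ∞) : WithTop ℕ∞) φ)
    (hφ0 : ∀ x, 1 ≤ ‖x‖ → φ x = 0)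
    (u : ℕ → E) (hu : ∃ C, ∀ n, ‖u n‖ ≤ C)
    (x₀ : EuclideanSpace ℝ (Fin p)) (xs : ℕ → EuclideanSpace ℝ (Fin p))
    (hxs : ∀ n, ‖xs (n + 1) - x₀‖ < (1 / 3) * ‖xs n - x₀‖ ∧ (1 / 3) * ‖xs n - x₀‖ < 1)
    (m : ℕ) (c : ℕ → ℝ)
    (hc : Filter.Tendsto (fun n => c n / ‖xs n - x₀‖ ^ m) Filter.atTop (𝓝 0)) :
    ContDiff ℝ m (fun x : EuclideanSpace ℝ (Fin p) =>
      ∑' n, (c n * φ ((‖xs n - x₀‖ / 2)⁻¹ • (x - xs n))) • u n) := by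
  obtain ⟨C, hC⟩ := hu
  have hstep : ∀ n, ‖xs (n + 1) - x₀‖ < 1 / 3 * ‖xs n - x₀‖ := fun n => (hxs n).1
  have hpos := pos_of_succ_lt_third (r := fun n => ‖xs n - x₀‖) (fun n => norm_nonneg _) hstep
  have hφcs : HasCompactSupport φ := HasCompactSupport.intro (isCompact_closedBall 0 1)
    fun x hx => hφ0 x (by simpa using hx : 1 < ‖x‖).le
  have hφm : ∀ k : ℕ, ContDiff ℝ k φ := fun k => hφsmooth.of_le (mod_cast le_top)
  choose M hM using fun k =>
    ((hφm k).continuous_iteratedFDeriv le_rfl).bounded_above_of_compact_support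
      (hφcs.iteratedFDeriv k)
  refine (shrinksDisjointlyTo_closedBall hstep).contDiff_tsum
    (ε := fun k n => 2 ^ m * M k * C * |c n / ‖xs n - x₀‖ ^ m|)
    (fun n => tsupport_smul_comp_smul_sub_subset hφ0 _ (half_pos (hpos n)) _ _)
    (fun n => by have := hφm m; fun_prop) (fun k _ => ?_) fun k hk n y => ?_
  · rw [Nat.cofinite_eq_atTop]
    simpa using hc.abs.const_mul (2 ^ m * M k * C)
  · refine (norm_iteratedFDeriv_bump_le hk (hφm k) hφ0 (hM k) (c n)
      (sub_ne_zero.1 (norm_pos_iff.1 (hpos n))) (u n) y).trans ?_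
    gcongr
    exacts [mul_nonneg (by positivity) ((norm_nonneg _).trans (hM k 0)), hC n]
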